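/- Let m be a positive integer, 0 < d < 1, and Q_m(x) = Σ_{i=0}^m x^i. Then every mode t of Q_m(x+d) satisfies ⌊m/2⌋ ≤ t ≤ min{m−1, m̄}, where m̄ = ⌈(m−d)/(d+1)⌉; i.e., ⌊m/2⌋ ≤ M_*(Q_m,d) ≤ M^*(Q_m,d) ≤ min{m−1, m̄}. -/

import Mathlib

open Finset

/-- The coefficients of `P(x+d)` where `P(x) = ∑_{i=0}^m a i * x^i`:
`b j = ∑_{i=j}^m a i * d^(i-j) * C(i,j)`. -/
noncomputable def shiftCoeff (a : ℕ → ℝ) (m : ℕ) (d : ℝ) (j : ℕ) : ℝ :=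
  ∑ i ∈ Finset.Icc j m, a i * d ^ (i - j) * (i.choose j : ℝ)

/-- `t` is a mode of the finite sequence `b 0, b 1, …, b m`, i.e.
`b 0 ≤ ⋯ ≤ b t ≥ ⋯ ≥ b m`. -/
def IsMode (b : ℕ → ℝ) (m t : ℕ) : Prop :=
  t ≤ m ∧ (∀ i, i < t → b i ≤ b (i + 1)) ∧ (∀ i, t ≤ i → i < m → b (i + 1) ≤ b i)

/-- `m̄(d) = ⌈(m - d)/(d + 1)⌉` (a nonnegative integer since `(m-d)/(d+1) > -1`). -/
noncomputable def mbar (m : ℕ) (d : ℝ) : ℕ := (⌈((m : ℝ) - d) / (d + 1)⌉).toNat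

/-- The coefficients of `Q_m(x+d)` where `Q_m(x) = ∑_{i=0}^m x^i`:
`d_j = ∑_{i=j}^m d^(i-j) * C(i,j)`. -/
noncomputable def qCoeff (m : ℕ) (d : ℝ) (j : ℕ) : ℝ :=
  ∑ i ∈ Finset.Icc j m, d ^ (i - j) * (i.choose j : ℝ)

/-! For the coefficients `q j` of `Q_m(x + d)`, the identity
`(x + d - 1) Q_m(x + d) = (x + d) ^ (m + 1) - 1` gives
`q j + (d - 1) q (j + 1) = C(m+1, j+1) d ^ (m - j)`, and hence, for the differences
`Δ j = q (j + 1) - q j`,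
`Δ j = (1 - d) Δ (j + 1) + d ^ (m - j - 1) (C(m+1, j+2) - d C(m+1, j+1))`.
The bracket has the sign of `m - j - d (j + 2)`, which decreases in `j`. Once it is `≤ 0`,
downward induction from `Δ m = -1` makes all later differences negative; while it is positive,
`Δ j ≤ 0` forces `Δ (j + 1) < 0`. So the coefficients are unimodal and decrease from `m̄` on and
at the last index, while they increase up to `⌊m/2⌋` because `C(m+1, j+1) ≤ C(m+1, j+2)` there. -/

open Polynomial

theorem IsMode.lt_of_lt_succ {b : ℕ → ℝ} {m t j : ℕ} (ht : IsMode b m t) (hj : j < m)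
    (h : b j < b (j + 1)) : j < t := by
  by_contra! hjt
  exact (ht.2.2 j hjt hj).not_gt h

theorem IsMode.le_of_succ_lt {b : ℕ → ℝ} {m t j : ℕ} (ht : IsMode b m t)
    (h : b (j + 1) < b j) : t ≤ j := by
  by_contra! hjt
  exact (ht.2.1 j hjt).not_gt h

theorem exists_isMode_of_le_imp_le (b : ℕ → ℝ) (m : ℕ)
    (h : ∀ j, j + 1 < m → b (j + 1) ≤ b j → b (j + 2) ≤ b (j + 1)) : ∃ t, IsMode b m t := by
  classical
  have hex : ∃ j, m ≤ j ∨ b (j + 1) ≤ b j := ⟨m, .inl le_rfl⟩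
  refine ⟨Nat.find hex, Nat.find_le (.inl le_rfl), fun i hi => ?_, fun i hi him => ?_⟩
  · have := Nat.find_min hex hi
    push Not at this
    exact this.2.le
  · induction i, hi using Nat.le_induction with
    | base => exact (Nat.find_spec hex).resolve_left him.not_ge
    | succ i _ ih => exact h i him (ih (by omega))

theorem sub_mbar_le (m : ℕ) {d : ℝ} (hd : -1 < d) :
    (m : ℝ) - mbar m d ≤ d * (mbar m d + 1) := by
  have h : ((m : ℝ) - d) / (d + 1) ≤ mbar m d :=
    calc ((m : ℝ) - d) / (d + 1) ≤ ⌈((m : ℝ) - d) / (d + 1)⌉ := Int.le_ceil _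
      _ ≤ mbar m d := by exact_mod_cast Int.self_le_toNat _
  rw [div_le_iff₀ (by linarith)] at h
  linarith

theorem mbar_le (m : ℕ) {d : ℝ} (hd : 0 ≤ d) : mbar m d ≤ m := by
  refine Int.toNat_le.2 (Int.ceil_le.2 ?_)
  rw [div_le_iff₀ (by linarith)]
  push_cast
  nlinarith

theorem cast_choose_succ_succ_mul (m j : ℕ) (hj : j ≤ m) :
    ((m + 1).choose (j + 2) : ℝ) * (j + 2) = (m + 1).choose (j + 1) * ((m : ℝ) - j) := by
  have h := Nat.choose_succ_right_eq (m + 1) (j + 1)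
  rw [Nat.add_sub_add_right] at h
  rw [← Nat.cast_sub hj]
  exact_mod_cast h

theorem qCoeff_eq_coeff (m : ℕ) (d : ℝ) (j : ℕ) :
    qCoeff m d j = (∑ i ∈ range (m + 1), (X + C d) ^ i).coeff j := by
  rw [finsetSum_coeff, qCoeff]
  simp only [coeff_X_add_C_pow]
  refine Finset.sum_subset (fun i hi => ?_) fun i _ hi => ?_
  · simp only [mem_Icc, mem_range] at hi ⊢
    omega
  · simp_all [Nat.choose_eq_zero_of_lt]

theorem qCoeff_add_sub_one_mul (m : ℕ) (d : ℝ) (j : ℕ) :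
    qCoeff m d j + (d - 1) * qCoeff m d (j + 1) = (m + 1).choose (j + 1) * d ^ (m - j) := by
  have h := congrArg (coeff · (j + 1)) (geom_sum_mul (X + C d) (m + 1))
  simp only [show X + C d - 1 = X + C (d - 1) by simp [sub_eq_add_neg, add_assoc], mul_add,
    coeff_add, coeff_mul_X, coeff_mul_C, coeff_sub, coeff_X_add_C_pow, coeff_one,
    ← qCoeff_eq_coeff, Nat.add_sub_add_right, Nat.add_eq_zero_iff, one_ne_zero, and_false,
    if_false, sub_zero] at h
  linarith

theorem qCoeff_self (m : ℕ) (d : ℝ) : qCoeff m d m = 1 := by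
  simp [qCoeff]

section

variable {m : ℕ} {d : ℝ}

theorem qCoeff_of_lt {j : ℕ} (h : m < j) : qCoeff m d j = 0 := by
  simp [qCoeff, Finset.Icc_eq_empty_of_lt h]

theorem qCoeff_pos {j : ℕ} (hd : 0 < d) (hj : j ≤ m) : 0 < qCoeff m d j :=
  Finset.sum_pos (fun i hi => by
    have := Nat.choose_pos (Finset.mem_Icc.1 hi).1
    positivity) ⟨j, Finset.mem_Icc.2 ⟨le_rfl, hj⟩⟩

theorem qCoeff_succ_sub_eq {j : ℕ} (hj : j < m) :
    qCoeff m d (j + 1) - qCoeff m d j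
      = (1 - d) * (qCoeff m d (j + 2) - qCoeff m d (j + 1))
        + d ^ (m - (j + 1)) * ((m + 1).choose (j + 2) - d * (m + 1).choose (j + 1)) := by
  have h₁ := qCoeff_add_sub_one_mul m d j
  have h₂ := qCoeff_add_sub_one_mul m d (j + 1)
  rw [show m - j = m - (j + 1) + 1 by omega, pow_succ] at h₁
  linear_combination h₂ - h₁

theorem qCoeff_lt_succ {j : ℕ} (hd0 : 0 < d) (hd1 : d < 1) (h : 2 * (j + 1) ≤ m) :
    qCoeff m d j < qCoeff m d (j + 1) := by
  have hC : ((m + 1).choose (j + 1) : ℝ) ≤ (m + 1).choose (j + 2) := by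
    have := cast_choose_succ_succ_mul m j (by omega)
    have : (j : ℝ) + 2 ≤ m - j := by
      rw [le_sub_iff_add_le]
      exact_mod_cast (by omega : j + 2 + j ≤ m)
    nlinarith [Nat.cast_nonneg (α := ℝ) ((m + 1).choose (j + 1))]
  have hΔ : qCoeff m d (j + 1) - qCoeff m d j = d * (1 - d) * qCoeff m d (j + 2)
      + d * d ^ (m - (j + 1)) * ((m + 1).choose (j + 2) - (m + 1).choose (j + 1)) := by
    have h₁ := qCoeff_add_sub_one_mul m d j
    have h₂ := qCoeff_add_sub_one_mul m d (j + 1)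
    rw [show m - j = m - (j + 1) + 1 by omega, pow_succ] at h₁
    linear_combination d * h₂ - h₁
  have hq := qCoeff_pos (m := m) (j := j + 2) hd0 (by omega)
  have hp := pow_pos hd0 (m - (j + 1))
  nlinarith [mul_pos (mul_pos hd0 (sub_pos.2 hd1)) hq,
    mul_nonneg (mul_pos hd0 hp).le (sub_nonneg.2 hC)]

theorem qCoeff_lt_pred (hd : 0 < d) (hm : 0 < m) : qCoeff m d m < qCoeff m d (m - 1) := by
  have h := qCoeff_add_sub_one_mul m d (m - 1)
  rw [Nat.sub_add_cancel hm, qCoeff_self, Nat.choose_succ_self_right,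
    show m - (m - 1) = 1 by omega, pow_one] at h
  rw [qCoeff_self]
  have : (0 : ℝ) < m := by exact_mod_cast hm
  push_cast at h
  nlinarith

theorem qCoeff_succ_lt {j : ℕ} (hd0 : 0 ≤ d) (hd1 : d < 1) (hj : j ≤ m)
    (h : (m : ℝ) - j ≤ d * (j + 2)) : qCoeff m d (j + 1) < qCoeff m d j := by
  induction hj using Nat.decreasingInduction with
  | self => rw [qCoeff_of_lt (Nat.lt_succ_self m), qCoeff_self]; exact one_pos
  | of_succ j hj ih =>
    have hΔ : qCoeff m d (j + 2) - qCoeff m d (j + 1) < 0 :=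
      sub_neg.2 (ih (by push_cast; linarith))
    have hg : ((m + 1).choose (j + 2) : ℝ) - d * (m + 1).choose (j + 1) ≤ 0 := by
      have := cast_choose_succ_succ_mul m j hj.le
      nlinarith [Nat.cast_nonneg (α := ℝ) ((m + 1).choose (j + 1))]
    have := qCoeff_succ_sub_eq (d := d) hj
    nlinarith [mul_nonpos_of_nonneg_of_nonpos (pow_nonneg hd0 (m - (j + 1))) hg]

theorem qCoeff_succ_succ_lt {j : ℕ} (hd0 : 0 < d) (hd1 : d < 1) (hj : j < m)
    (h : qCoeff m d (j + 1) ≤ qCoeff m d j) : qCoeff m d (j + 2) < qCoeff m d (j + 1) := by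
  by_cases hc : (m : ℝ) - j ≤ d * (j + 2)
  · exact qCoeff_succ_lt hd0.le hd1 hj (by push_cast; linarith)
  · have hg : 0 < ((m + 1).choose (j + 2) : ℝ) - d * (m + 1).choose (j + 1) := by
      have := cast_choose_succ_succ_mul m j hj.le
      have : (0 : ℝ) < (m + 1).choose (j + 1) := by exact_mod_cast Nat.choose_pos (by omega)
      nlinarith
    have := qCoeff_succ_sub_eq (d := d) hj
    nlinarith [mul_pos (pow_pos hd0 (m - (j + 1))) hg]

end

/-- Proposition 3.6(i).  Let `0 < d < 1`.  Then `Q_m(x+d)` has a mode,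
and every mode `t` of `Q_m(x+d)` satisfies `⌊m/2⌋ ≤ t ≤ min {m−1, m̄}`. -/
theorem stmt_14 (m : ℕ) (hm : 0 < m) (d : ℝ) (hd0 : 0 < d) (hd1 : d < 1) :
    (∃ t, IsMode (qCoeff m d) m t) ∧
      ∀ t, IsMode (qCoeff m d) m t → m / 2 ≤ t ∧ t ≤ min (m - 1) (mbar m d) := by
  refine ⟨exists_isMode_of_le_imp_le _ _
    fun j hj h => (qCoeff_succ_succ_lt hd0 hd1 (by omega) h).le, fun t ht => ⟨?_, le_min ?_ ?_⟩⟩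
  · rcases Nat.eq_zero_or_pos (m / 2) with h | h
    · omega
    · have := ht.lt_of_lt_succ (j := m / 2 - 1) (by omega) (qCoeff_lt_succ hd0 hd1 (by omega))
      omega
  · refine ht.le_of_succ_lt ?_
    rw [Nat.sub_add_cancel hm]
    exact qCoeff_lt_pred hd0 hm
  · refine ht.le_of_succ_lt (qCoeff_succ_lt hd0.le hd1 (mbar_le m hd0.le) ?_)
    linarith [sub_mbar_le m (d := d) (by linarith)]
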